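/- Let x, y : Fin n → EuclideanSpace ℝ (Fin 3) be point configurations, and suppose there is a single multiset M of real numbers such that for every i ∈ Fin n, the multiset {dist (x i) (x j) : j ∈ Fin n} equals M and the multiset {dist (y i) (y j) : j ∈ Fin n} equals M. Then 1-WL-E fails to distinguish x and y; in fact, for every t, the relation R_t relates every pair of nodes of V = Fin n ⊕ Fin n (all nodes keep the same color at every iteration). -/

import Mathlib

noncomputable section OneWLE

/-- The position of a node of the disjoint union of the two configurations. -/
def WLpos {n m : ℕ} (x : Fin n → EuclideanSpace ℝ (Fin 3))
    (y : Fin m → EuclideanSpace ℝ (Fin 3)) :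
    Fin n ⊕ Fin m → EuclideanSpace ℝ (Fin 3) :=
  Sum.elim x y

/-- The node set of the side of a node `u` of the disjoint union. -/
def WLside (n m : ℕ) : Fin n ⊕ Fin m → Type
  | Sum.inl _ => Fin n
  | Sum.inr _ => Fin m

/-- Inclusion of a side into the disjoint union. -/
def WLemb {n m : ℕ} : (u : Fin n ⊕ Fin m) → WLside n m u → Fin n ⊕ Fin m
  | Sum.inl _, w => Sum.inl w
  | Sum.inr _, w => Sum.inr w

/-- The 1-WL-E (Vanilla DisGNN color refinement) relations `R_t` on the disjoint union
of two complete distance graphs, with trivial initial colors: `R_0` relates all pairs,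
and `u R_{t+1} v` iff `u R_t v` and there is a bijection `σ` between the side of `u`
and the side of `v` preserving distances to `u` resp. `v` and the relation `R_t`. -/
def WLRel {n m : ℕ} (x : Fin n → EuclideanSpace ℝ (Fin 3))
    (y : Fin m → EuclideanSpace ℝ (Fin 3)) :
    ℕ → (Fin n ⊕ Fin m) → (Fin n ⊕ Fin m) → Prop
  | 0, _, _ => True
  | t + 1, u, v => WLRel x y t u v ∧
      ∃ σ : WLside n m u ≃ WLside n m v, ∀ w : WLside n m u,
        dist (WLpos x y u) (WLpos x y (WLemb u w))
          = dist (WLpos x y v) (WLpos x y (WLemb v (σ w))) ∧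
        WLRel x y t (WLemb u w) (WLemb v (σ w))

end OneWLE

/-! Equal distance multisets yield, for any two nodes, a bijection between their sides
matching distances (fiberwise, one fiber per distance value). Induction on `t` then shows
that `R_t` is total: the same bijection witnesses `R_{t+1}`, since `R_t` relates everything. -/

theorem exists_equiv_of_map_univ_eq {α β γ : Type*} [Fintype α] [Fintype β]
    (f : α → γ) (g : β → γ)
    (h : Multiset.map f Finset.univ.val = Multiset.map g Finset.univ.val) :
    ∃ σ : α ≃ β, ∀ a, f a = g (σ a) := by
  classical
  have hfiber (c : γ) : Fintype.card {a // f a = c} = Fintype.card {b // g b = c} := by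
    simpa [Fintype.card_subtype, Multiset.count_map, eq_comm, Finset.card_def,
      Finset.filter_val] using congrArg (Multiset.count c) h
  exact ⟨Equiv.ofFiberEquiv fun c => Fintype.equivOfCardEq (hfiber c),
    fun a => (Equiv.ofFiberEquiv_map _ a).symm⟩

theorem wlRel_of_forall_exists_dist_equiv {n m : ℕ} {x : Fin n → EuclideanSpace ℝ (Fin 3)}
    {y : Fin m → EuclideanSpace ℝ (Fin 3)}
    (h : ∀ u v : Fin n ⊕ Fin m, ∃ σ : WLside n m u ≃ WLside n m v, ∀ w,
      dist (WLpos x y u) (WLpos x y (WLemb u w)) = dist (WLpos x y v) (WLpos x y (WLemb v (σ w))))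
    (t : ℕ) (u v : Fin n ⊕ Fin m) : WLRel x y t u v := by
  induction t generalizing u v with
  | zero => trivial
  | succ t ih =>
    obtain ⟨σ, hσ⟩ := h u v
    exact ⟨ih u v, σ, fun w => ⟨hσ w, ih _ _⟩⟩

theorem wlRel_top_of_same_distance_lists (n : ℕ)
    (x y : Fin n → EuclideanSpace ℝ (Fin 3)) (M : Multiset ℝ)
    (hx : ∀ i : Fin n,
      Multiset.map (fun j => dist (x i) (x j)) (Finset.univ : Finset (Fin n)).val = M)
    (hy : ∀ i : Fin n,
      Multiset.map (fun j => dist (y i) (y j)) (Finset.univ : Finset (Fin n)).val = M) :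
    ∀ (t : ℕ) (u v : Fin n ⊕ Fin n), WLRel x y t u v := by
  have dist_equiv {p q : Fin n → EuclideanSpace ℝ (Fin 3)}
      (hp : ∀ i, Multiset.map (fun j => dist (p i) (p j)) Finset.univ.val = M)
      (hq : ∀ k, Multiset.map (fun j => dist (q k) (q j)) Finset.univ.val = M) (i k : Fin n) :
      ∃ σ : Fin n ≃ Fin n, ∀ j, dist (p i) (p j) = dist (q k) (q (σ j)) :=
    exists_equiv_of_map_univ_eq _ _ ((hp i).trans (hq k).symm)
  refine wlRel_of_forall_exists_dist_equiv fun u v => ?_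
  rcases u with i | i <;> rcases v with k | k
  · exact dist_equiv hx hx i k
  · exact dist_equiv hx hy i k
  · exact dist_equiv hy hx i k
  · exact dist_equiv hy hy i k
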